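/- arXiv:2512.03977 — 4 statements merged into one kernel-verified Lean document; each statement's English description precedes it below -/
import Mathlib

section
/- Let Ω ⊆ ℝ^N be a nonempty compact set, let c ∈ ℝ^N be a minimizer of the function x ↦ sup_{y∈Ω} ‖y−x‖, and let r = sup_{y∈Ω} ‖y−c‖. Then for every point ξ ∈ ℝ^N: sup_{y∈Ω} ‖y−ξ‖² ≥ ‖ξ−c‖² + r². -/
noncomputable section

open RealInnerProductSpace

lemma biSup_eq_of_max {α : Type*} {s : Set α} {f : α → ℝ} {y₀ : α} (hy₀ : y₀ ∈ s)
    (hmax : ∀ y ∈ s, f y ≤ f y₀) (h0 : 0 ≤ f y₀) : (⨆ y ∈ s, f y) = f y₀ := by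
  apply le_antisymm
  · exact Real.iSup_le (fun y => Real.iSup_le (fun hy => hmax y hy) h0) h0
  · have hbdd : BddAbove (Set.range fun y => ⨆ _ : y ∈ s, f y) := by
      refine ⟨f y₀, ?_⟩
      rintro _ ⟨y, rfl⟩
      exact Real.iSup_le (fun hy => hmax y hy) h0
    calc f y₀ = ⨆ _ : y₀ ∈ s, f y₀ := (ciSup_pos (f := fun _ => f y₀) hy₀).symm
      _ ≤ ⨆ y ∈ s, f y := le_ciSup hbdd y₀

theorem chebyshev_center_distance_bound
    (N : ℕ) (Ω : Set (EuclideanSpace ℝ (Fin N))) (hne : Ω.Nonempty) (hΩ : IsCompact Ω)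
    (c : EuclideanSpace ℝ (Fin N))
    (hc : ∀ x : EuclideanSpace ℝ (Fin N),
      (⨆ y ∈ Ω, ‖y - c‖) ≤ ⨆ y ∈ Ω, ‖y - x‖)
    (r : ℝ) (hr : r = ⨆ y ∈ Ω, ‖y - c‖)
    (ξ : EuclideanSpace ℝ (Fin N)) :
    ‖ξ - c‖ ^ 2 + r ^ 2 ≤ ⨆ y ∈ Ω, ‖y - ξ‖ ^ 2 := by
  -- max point for distance to any x
  have hmaxpt : ∀ x : EuclideanSpace ℝ (Fin N), ∃ y₀ ∈ Ω,
      (∀ y ∈ Ω, ‖y - x‖ ≤ ‖y₀ - x‖) ∧ (⨆ y ∈ Ω, ‖y - x‖) = ‖y₀ - x‖ := by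
    intro x
    obtain ⟨y₀, hy₀, hmax⟩ := hΩ.exists_isMaxOn hne
      ((continuous_id.sub continuous_const).norm.continuousOn)
    exact ⟨y₀, hy₀, fun y hy => hmax hy,
      biSup_eq_of_max hy₀ (fun y hy => hmax hy) (norm_nonneg _)⟩
  set d : ℝ := ‖ξ - c‖ with hd
  obtain ⟨yc, hyc, hycmax, hyceq⟩ := hmaxpt c
  have hrle : ∀ y ∈ Ω, ‖y - c‖ ≤ r := by
    intro y hy; rw [hr, hyceq]; exact hycmax y hy
  have hr0 : 0 ≤ r := by rw [hr, hyceq]; exact norm_nonneg _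
  -- it suffices to prove the bound up to ε
  refine le_of_forall_pos_le_add (fun ε hε => ?_)
  set t : ℝ := min 1 (ε / (d ^ 2 + 1)) with htdef
  have hd0 : 0 ≤ d := norm_nonneg _
  have ht0 : 0 < t := lt_min one_pos (div_pos hε (by positivity))
  have ht1 : t ≤ 1 := min_le_left _ _
  have htd : t * d ^ 2 ≤ ε := by
    have h1 : t ≤ ε / (d ^ 2 + 1) := min_le_right _ _
    have h2 : t * d ^ 2 ≤ (ε / (d ^ 2 + 1)) * d ^ 2 := by nlinarith
    have h3 : (ε / (d ^ 2 + 1)) * d ^ 2 ≤ ε := by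
      rw [div_mul_eq_mul_div, div_le_iff₀ (by positivity)]; nlinarith
    linarith
  set x : EuclideanSpace ℝ (Fin N) := c + t • (ξ - c) with hx
  obtain ⟨y, hy, hymax, hyeq⟩ := hmaxpt x
  -- r ≤ ‖y - x‖ since c is a minimizer
  have hrx : r ≤ ‖y - x‖ := by rw [hr, ← hyeq]; exact hc x
  -- rewrite y - x
  have hyx : y - x = (y - c) - t • (ξ - c) := by
    rw [hx]; abel
  have hyξ : y - ξ = (y - c) - (ξ - c) := by abel
  set a : EuclideanSpace ℝ (Fin N) := y - c with ha
  set v : EuclideanSpace ℝ (Fin N) := ξ - c with hv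
  have eq1 : ‖y - x‖ ^ 2 = ‖a‖ ^ 2 - 2 * (t * ⟪a, v⟫) + t ^ 2 * d ^ 2 := by
    rw [hyx, norm_sub_sq_real, real_inner_smul_right, norm_smul]
    simp [abs_of_pos ht0, mul_pow, hd]
  have eq2 : ‖y - ξ‖ ^ 2 = ‖a‖ ^ 2 - 2 * ⟪a, v⟫ + d ^ 2 := by
    rw [hyξ, norm_sub_sq_real, hd]
  have hna : ‖a‖ ≤ r := hrle y hy
  have hna0 : 0 ≤ ‖a‖ := norm_nonneg _
  have h1 : r ^ 2 ≤ ‖y - x‖ ^ 2 := by nlinarith [norm_nonneg (y - x)]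
  -- inner product bound: ⟪a, v⟫ ≤ t * d^2 / 2
  have hinner : ⟪a, v⟫ ≤ t * d ^ 2 / 2 := by nlinarith
  have hlow : r ^ 2 + d ^ 2 - t * d ^ 2 ≤ ‖y - ξ‖ ^ 2 := by nlinarith
  have hS : ‖y - ξ‖ ^ 2 ≤ ⨆ z ∈ Ω, ‖z - ξ‖ ^ 2 := by
    obtain ⟨y₀, hy₀, hmax⟩ := hΩ.exists_isMaxOn hne
      (((continuous_id.sub continuous_const).norm.pow 2).continuousOn)
    have := biSup_eq_of_max (f := fun z => ‖z - ξ‖ ^ 2) hy₀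
      (fun z hz => hmax hz) (by positivity)
    rw [this]
    exact hmax hy
  linarith
end
end

section
/- Optimality condition for the Chebyshev center: let Ω ⊆ ℝ^N be a nonempty compact set, let c ∈ ℝ^N be a minimizer of the function x ↦ sup_{y∈Ω} ‖y−x‖, let r = sup_{y∈Ω} ‖y−c‖, and let M = {y ∈ Ω : ‖y−c‖ = r} denote the set of farthest points of Ω from c. Then c lies in the convex hull of M. -/
open Finset Set

noncomputable section

lemma aux_isCompact_convexHull {N : ℕ} {s : Set (EuclideanSpace ℝ (Fin N))}
    (hs : IsCompact s) : IsCompact (convexHull ℝ s) := by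
  classical
  rcases s.eq_empty_or_nonempty with rfl | ⟨m₀, hm₀⟩
  · simp
  set n := N + 1 with hn
  set f : (Fin n → ℝ) × (Fin n → EuclideanSpace ℝ (Fin N)) → EuclideanSpace ℝ (Fin N) :=
    fun p => ∑ i, p.1 i • p.2 i with hfdef
  have hf : Continuous f := by
    apply continuous_finset_sum
    intro i _
    exact ((continuous_apply i).comp continuous_fst).smul
      ((continuous_apply i).comp continuous_snd)
  have hD : IsCompact ((stdSimplex ℝ (Fin n)) ×ˢ (Set.univ.pi fun _ : Fin n => s)) :=
    IsCompact.prod (by apply isCompact_stdSimplex) (isCompact_univ_pi fun _ => hs)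
  have him : convexHull ℝ s
      = f '' ((stdSimplex ℝ (Fin n)) ×ˢ (Set.univ.pi fun _ : Fin n => s)) := by
    apply Set.Subset.antisymm
    · intro x hx
      obtain ⟨ι, hfin, z, w, hrange, hindep, hpos, hsum1, hcomb⟩ :=
        eq_pos_convex_span_of_mem_convexHull hx
      have hcard : Fintype.card ι ≤ n := by
        have h1 := hindep.card_le_finrank_succ
        have h2 : Module.finrank ℝ (vectorSpan ℝ (Set.range z))
            ≤ Module.finrank ℝ (EuclideanSpace ℝ (Fin N)) := Submodule.finrank_le _
        rw [finrank_euclideanSpace_fin] at h2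
        omega
      obtain ⟨g⟩ : Nonempty (ι ↪ Fin n) :=
        Function.Embedding.nonempty_of_card_le (by simpa using hcard)
      set w' : Fin n → ℝ := fun j => if h : ∃ i, g i = j then w h.choose else 0 with hw'
      set z' : Fin n → EuclideanSpace ℝ (Fin N) :=
        fun j => if h : ∃ i, g i = j then z h.choose else m₀ with hz'
      have hgw : ∀ i, w' (g i) = w i := by
        intro i
        have h : ∃ i', g i' = g i := ⟨i, rfl⟩
        simp only [hw', dif_pos h]
        congr 1
        exact g.injective h.choose_spec
      have hgz : ∀ i, z' (g i) = z i := by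
        intro i
        have h : ∃ i', g i' = g i := ⟨i, rfl⟩
        simp only [hz', dif_pos h]
        exact congrArg z (g.injective h.choose_spec)
      have hvan : ∀ j : Fin n, j ∉ Finset.univ.map g → w' j = 0 := by
        intro j hj
        have : ¬ ∃ i, g i = j := by
          intro ⟨i, hi⟩
          exact hj (Finset.mem_map.2 ⟨i, Finset.mem_univ _, hi⟩)
        simp only [hw', dif_neg this]
      have hsum' : ∑ j, w' j = 1 := by
        rw [← hsum1]
        rw [← Finset.sum_subset (Finset.subset_univ (Finset.univ.map g))
          (fun j _ hj => hvan j hj)]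
        rw [Finset.sum_map]
        simp [hgw]
      have hcomb' : ∑ j, w' j • z' j = x := by
        rw [← hcomb]
        rw [← Finset.sum_subset (Finset.subset_univ (Finset.univ.map g))
          (fun j _ hj => by rw [hvan j hj, zero_smul])]
        rw [Finset.sum_map]
        simp [hgw, hgz]
      refine ⟨(w', z'), ⟨?_, ?_⟩, hcomb'⟩
      · refine ⟨fun j => ?_, hsum'⟩
        by_cases h : ∃ i, g i = j
        · simp only [hw', dif_pos h]; exact (hpos _).le
        · simp only [hw', dif_neg h]; exact le_refl 0
      · intro j _
        by_cases h : ∃ i, g i = j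
        · simp only [hz', dif_pos h]
          exact hrange (Set.mem_range_self _)
        · simp only [hz', dif_neg h]
          exact hm₀
    · rintro _ ⟨⟨w, z⟩, ⟨hw, hz⟩, rfl⟩
      have h := Finset.centerMass_mem_convexHull (Finset.univ) (fun i _ => hw.1 i)
        (by rw [hw.2]; norm_num) (fun i _ => hz i (Set.mem_univ i))
      rwa [Finset.centerMass_eq_of_sum_1 _ _ hw.2] at h
  rw [him]
  exact hD.image hf

open RealInnerProductSpace

theorem chebyshev_center_mem_convexHull_farthest_points
    (N : ℕ) (Ω : Set (EuclideanSpace ℝ (Fin N))) (hne : Ω.Nonempty) (hΩ : IsCompact Ω)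
    (c : EuclideanSpace ℝ (Fin N))
    (hc : ∀ x : EuclideanSpace ℝ (Fin N),
      (⨆ y ∈ Ω, ‖y - c‖) ≤ ⨆ y ∈ Ω, ‖y - x‖)
    (r : ℝ) (hr : r = ⨆ y ∈ Ω, ‖y - c‖) :
    c ∈ convexHull ℝ {y ∈ Ω | ‖y - c‖ = r} := by
  classical
  obtain ⟨y₀, hy₀Ω, hy₀max⟩ := hΩ.exists_isMaxOn hne
    ((continuous_id.sub continuous_const).norm).continuousOn
  have hbound : ∀ y : EuclideanSpace ℝ (Fin N), (⨆ _ : y ∈ Ω, ‖y - c‖) ≤ ‖y₀ - c‖ :=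
    fun y => Real.iSup_le (fun hy => hy₀max hy) (norm_nonneg _)
  have hry₀ : r = ‖y₀ - c‖ := by
    apply le_antisymm
    · rw [hr]; exact Real.iSup_le hbound (norm_nonneg _)
    · rw [hr]
      have hbdd : BddAbove (Set.range fun y => ⨆ _ : y ∈ Ω, ‖y - c‖) :=
        ⟨‖y₀ - c‖, by rintro _ ⟨y, rfl⟩; exact hbound y⟩
      calc ‖y₀ - c‖ = ⨆ _ : y₀ ∈ Ω, ‖y₀ - c‖ := by rw [ciSup_pos hy₀Ω]
        _ ≤ _ := le_ciSup hbdd y₀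
  have hle : ∀ y ∈ Ω, ‖y - c‖ ≤ r := fun y hy => hry₀ ▸ hy₀max hy
  have hr0 : 0 ≤ r := hry₀ ▸ norm_nonneg _
  set M : Set (EuclideanSpace ℝ (Fin N)) := {y ∈ Ω | ‖y - c‖ = r} with hM
  have hy₀M : y₀ ∈ M := ⟨hy₀Ω, hry₀.symm⟩
  by_contra hcM
  rcases eq_or_lt_of_le hr0 with hr0' | hr0'
  · refine hcM (subset_convexHull ℝ M ?_)
    have hc0 : y₀ = c := by
      have h0 : ‖y₀ - c‖ = 0 := by rw [← hry₀, ← hr0']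
      simpa [sub_eq_zero] using h0
    rw [← hc0]; exact hy₀M
  have hMc : IsCompact M := by
    have hMeq : M = Ω ∩ {y | ‖y - c‖ = r} := rfl
    rw [hMeq]
    exact hΩ.inter_right
      (isClosed_eq ((continuous_id.sub continuous_const).norm) continuous_const)
  obtain ⟨φ, u, hφc, hφM⟩ := geometric_hahn_banach_point_closed
    (convex_convexHull ℝ M) (aux_isCompact_convexHull hMc).isClosed hcM
  set v : EuclideanSpace ℝ (Fin N) := (InnerProductSpace.toDual ℝ _).symm φ with hv
  have hvapp : ∀ x : EuclideanSpace ℝ (Fin N), ⟪v, x⟫ = φ x :=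
    fun x => InnerProductSpace.toDual_symm_apply
  set δ : ℝ := u - φ c with hδ
  have hδ0 : 0 < δ := sub_pos.2 hφc
  have hδM : ∀ y ∈ M, δ < ⟪v, y - c⟫ := by
    intro y hy
    have h := hφM y (subset_convexHull ℝ M hy)
    rw [hvapp, map_sub]
    simp only [hδ]
    linarith
  have hv0 : 0 < ‖v‖ := by
    rcases eq_or_lt_of_le (norm_nonneg v) with h | h
    · exfalso
      have h1 := hδM y₀ hy₀M
      have hv' : v = 0 := by rwa [eq_comm, norm_eq_zero] at h
      rw [hv'] at h1
      simp only [inner_zero_left] at h1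
      linarith
    · exact h
  set A : Set (EuclideanSpace ℝ (Fin N)) := {y ∈ Ω | ⟪v, y - c⟫ ≤ δ / 2} with hA
  have hclosed : IsClosed {y : EuclideanSpace ℝ (Fin N) | ⟪v, y - c⟫ ≤ δ / 2} :=
    isClosed_le (continuous_const.inner (continuous_id.sub continuous_const)) continuous_const
  have hAc : IsCompact A := hΩ.inter_right hclosed
  obtain ⟨ρ, hρr, hρA⟩ : ∃ ρ, ρ < r ∧ ∀ y ∈ A, ‖y - c‖ ≤ ρ := by
    rcases A.eq_empty_or_nonempty with hAe | hAne
    · exact ⟨0, hr0', by simp [hAe]⟩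
    · obtain ⟨y₁, hy₁A, hy₁max⟩ := hAc.exists_isMaxOn hAne
        ((continuous_id.sub continuous_const).norm).continuousOn
      refine ⟨‖y₁ - c‖, ?_, fun y hy => hy₁max hy⟩
      rcases lt_or_eq_of_le (hle y₁ hy₁A.1) with h | h
      · exact h
      · exfalso
        have h1 := hδM y₁ ⟨hy₁A.1, h⟩
        have h2 := hy₁A.2
        linarith
  set t : ℝ := min (δ / (2 * ‖v‖ ^ 2)) ((r - ρ) / (2 * ‖v‖)) with ht
  have ht0 : 0 < t := lt_min (by positivity) (div_pos (by linarith) (by positivity))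
  have ht1 : t * ‖v‖ ^ 2 ≤ δ / 2 := by
    have h := min_le_left (δ / (2 * ‖v‖ ^ 2)) ((r - ρ) / (2 * ‖v‖))
    rw [← ht] at h
    calc t * ‖v‖ ^ 2 ≤ (δ / (2 * ‖v‖ ^ 2)) * ‖v‖ ^ 2 := by nlinarith [sq_nonneg ‖v‖]
      _ = δ / 2 := by field_simp
  have ht2 : ρ + t * ‖v‖ < r := by
    have h := min_le_right (δ / (2 * ‖v‖ ^ 2)) ((r - ρ) / (2 * ‖v‖))
    rw [← ht] at h
    have h2 : t * ‖v‖ ≤ (r - ρ) / 2 := by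
      calc t * ‖v‖ ≤ ((r - ρ) / (2 * ‖v‖)) * ‖v‖ := by nlinarith
        _ = (r - ρ) / 2 := by field_simp
    linarith
  set x : EuclideanSpace ℝ (Fin N) := c + t • v with hx
  set r₁ : ℝ := Real.sqrt (r ^ 2 - t * δ / 2) with hr₁
  have hr₁r : r₁ < r := by
    rw [hr₁, Real.sqrt_lt' hr0']
    nlinarith
  have hptwise : ∀ y ∈ Ω, ‖y - x‖ ≤ max r₁ (ρ + t * ‖v‖) := by
    intro y hy
    have hyx : y - x = (y - c) - t • v := by rw [hx]; abel
    by_cases hyA : y ∈ A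
    · refine le_max_of_le_right ?_
      calc ‖y - x‖ = ‖(y - c) - t • v‖ := by rw [hyx]
        _ ≤ ‖y - c‖ + ‖t • v‖ := norm_sub_le _ _
        _ ≤ ρ + t * ‖v‖ := by
            have h := hρA y hyA
            rw [norm_smul, Real.norm_eq_abs, abs_of_pos ht0]
            linarith
    · refine le_max_of_le_left ?_
      have hinner : δ / 2 ≤ ⟪v, y - c⟫ := le_of_not_ge (fun h => hyA ⟨hy, h⟩)
      have hsq : ‖(y - c) - t • v‖ ^ 2 ≤ r ^ 2 - t * δ / 2 := by
        have hid := norm_sub_sq_real (y - c) (t • v)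
        rw [real_inner_smul_right, norm_smul, Real.norm_eq_abs, abs_of_pos ht0, mul_pow] at hid
        rw [real_inner_comm] at hid
        have hyc : ‖y - c‖ ≤ r := hle y hy
        nlinarith [norm_nonneg (y - c)]
      rw [hyx, hr₁]
      exact (Real.le_sqrt (norm_nonneg _) ((sq_nonneg _).trans hsq)).2 hsq
  have hKey := hc x
  rw [← hr] at hKey
  have h0 : 0 ≤ max r₁ (ρ + t * ‖v‖) := le_max_of_le_left (Real.sqrt_nonneg _)
  have hUp : (⨆ y ∈ Ω, ‖y - x‖) ≤ max r₁ (ρ + t * ‖v‖) :=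
    Real.iSup_le (fun y => Real.iSup_le (fun hy => hptwise y hy) h0) h0
  have hlt : max r₁ (ρ + t * ‖v‖) < r := max_lt hr₁r ht2
  linarith [hKey.trans hUp]
end
end

section
/- Sphere-packing lower bound for covers: let m ≥ 1, let M ⊆ ℝ^N be a Borel set on which ℋ^m is σ-finite, and let X be a random vector whose law μ is concentrated on M and absolutely continuous with respect to ℋ^m_M, with density p. Fix s ∈ (1,∞) with ∫_M p^s dℋ^m < ∞, and suppose c_M > 0 satisfies ℋ^m(M ∩ B(z,δ)) ≤ c_M·δ^m for all z ∈ ℝ^N and δ > 0. Then for every finite collection Y₁,…,Y_K of bounded measurable subsets of ℝ^N whose union contains M: ∑_{i=1}^{K} μ(Y_i)·r_c(Y_i)² ≥ c_M^{−2/m} · e^{(2/m)·h_s(X)} · K^{−2s/(m(s−1))}, where h_s(X) = (1/(1−s))·log ∫_M p^s dℋ^m. -/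
open MeasureTheory Metric Bornology Filter
open scoped ENNReal

noncomputable section

/-- The Chebyshev radius of a set. -/
def chebRadius {E : Type*} [NormedAddCommGroup E] (Ω : Set E) : ℝ :=
  ⨅ z : E, ⨆ y ∈ Ω, ‖y - z‖

lemma iSup_mem_nonneg {E : Type*} [NormedAddCommGroup E] (Ω : Set E) (z : E) :
    0 ≤ ⨆ y ∈ Ω, ‖y - z‖ :=
  Real.iSup_nonneg fun _ => Real.iSup_nonneg fun _ => norm_nonneg _

lemma chebRadius_nonneg {E : Type*} [NormedAddCommGroup E] (Ω : Set E) : 0 ≤ chebRadius Ω :=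
  Real.iInf_nonneg fun z => iSup_mem_nonneg Ω z

lemma le_iSup_mem {E : Type*} [NormedAddCommGroup E] {Ω : Set E} (hb : IsBounded Ω) (z : E)
    {y : E} (hy : y ∈ Ω) : ‖y - z‖ ≤ ⨆ y ∈ Ω, ‖y - z‖ := by
  obtain ⟨R, hR⟩ := hb.subset_closedBall z
  have hbdd : BddAbove (Set.range fun y : E => ⨆ _ : y ∈ Ω, ‖y - z‖) := by
    refine ⟨max R 0, ?_⟩
    rintro x ⟨y', rfl⟩
    by_cases h : y' ∈ Ω
    · have h1 : (⨆ _ : y' ∈ Ω, ‖y' - z‖) = ‖y' - z‖ := ciSup_pos (f := fun _ => ‖y' - z‖) h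
      simp only [h1]
      have := hR h
      rw [mem_closedBall, dist_eq_norm] at this
      exact le_max_of_le_left this
    · have h1 : (⨆ _ : y' ∈ Ω, ‖y' - z‖) = 0 := by
        haveI : IsEmpty (y' ∈ Ω) := ⟨h⟩
        exact Real.iSup_of_isEmpty _
      simp only [h1]
      exact le_max_right _ _
  have h2 : (⨆ _ : y ∈ Ω, ‖y - z‖) = ‖y - z‖ := ciSup_pos (f := fun _ => ‖y - z‖) hy
  calc ‖y - z‖ = ⨆ _ : y ∈ Ω, ‖y - z‖ := h2.symm
    _ ≤ _ := le_ciSup hbdd y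

lemma exists_subset_ball {E : Type*} [NormedAddCommGroup E] [Nonempty E] {Ω : Set E}
    (hb : IsBounded Ω) {ε : ℝ} (hε : 0 < ε) : ∃ z, Ω ⊆ ball z (chebRadius Ω + ε) := by
  have : chebRadius Ω < chebRadius Ω + ε := lt_add_of_pos_right _ hε
  obtain ⟨z, hz⟩ := exists_lt_of_ciInf_lt this
  exact ⟨z, fun y hy => by
    rw [mem_ball, dist_eq_norm]
    exact lt_of_le_of_lt (le_iSup_mem hb z hy) hz⟩

theorem sphere_packing_lower_bound_for_covers
    (N m : ℕ) (hm : 1 ≤ m)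
    (M : Set (EuclideanSpace ℝ (Fin N))) (hM : MeasurableSet M)
    (hσ : SigmaFinite ((μH[(m : ℝ)]).restrict M))
    (μ : Measure (EuclideanSpace ℝ (Fin N))) [IsProbabilityMeasure μ]
    (p : EuclideanSpace ℝ (Fin N) → ℝ) (hp : ∀ x, 0 ≤ p x)
    (hμ : μ = ((μH[(m : ℝ)]).restrict M).withDensity fun x => ENNReal.ofReal (p x))
    (s : ℝ) (hs : 1 < s)
    (hps : IntegrableOn (fun x => p x ^ s) M (μH[(m : ℝ)]))
    (cM : ℝ) (hcM : 0 < cM)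
    (hcball : ∀ (z : EuclideanSpace ℝ (Fin N)) (δ : ℝ), 0 < δ →
      μH[(m : ℝ)] (M ∩ ball z δ) ≤ ENNReal.ofReal (cM * δ ^ m))
    (K : ℕ) (Y : Fin K → Set (EuclideanSpace ℝ (Fin N)))
    (hYm : ∀ i, MeasurableSet (Y i)) (hYb : ∀ i, Bornology.IsBounded (Y i))
    (hYcov : M ⊆ ⋃ i, Y i) :
    cM ^ (-(2 : ℝ) / (m : ℝ)) *
        Real.exp ((2 / (m : ℝ)) *
          ((1 / (1 - s)) * Real.log (∫ x in M, p x ^ s ∂(μH[(m : ℝ)])))) *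
        (K : ℝ) ^ (-(2 * s) / ((m : ℝ) * (s - 1)))
      ≤ ∑ i : Fin K, (μ (Y i)).toReal * chebRadius (Y i) ^ 2 := by
  classical
  set ν := (μH[(m : ℝ)]).restrict M with hν
  set I := ∫ x in M, p x ^ s ∂(μH[(m : ℝ)]) with hIdef
  have hm0 : (0:ℝ) < m := by exact_mod_cast Nat.lt_of_lt_of_le Nat.zero_lt_one hm
  have hs1 : (0:ℝ) < s - 1 := sub_pos.2 hs
  have hs0 : (0:ℝ) < s := lt_trans one_pos hs
  -- measurability
  have hpsmeas : AEMeasurable (fun x => p x ^ s) ν := hps.aestronglyMeasurable.aemeasurable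
  have hpmeas : AEMeasurable p ν := by
    have h1 : (fun x => (p x ^ s) ^ (1/s)) = p := funext fun x => by
      rw [← Real.rpow_mul (hp x), mul_one_div, div_self (by linarith : s ≠ 0), Real.rpow_one]
    rw [← h1]
    exact hpsmeas.pow_const _
  have hfmeas : AEMeasurable (fun x => ENNReal.ofReal (p x)) ν := hpmeas.ennreal_ofReal
  -- I ≥ 0 and lintegral identity
  have hI0 : 0 ≤ I := integral_nonneg fun x => Real.rpow_nonneg (hp x) s
  have hIlin : ENNReal.ofReal I = ∫⁻ x, ENNReal.ofReal (p x ^ s) ∂ν :=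
    ofReal_integral_eq_lintegral_ofReal hps
      (Filter.Eventually.of_forall fun x => Real.rpow_nonneg (hp x) s)
  -- μ univ = 1 and μ(Mᶜ) = 0
  have hMc : μ Mᶜ = 0 := by
    rw [hμ, withDensity_apply _ hM.compl]
    rw [Measure.restrict_restrict hM.compl]
    simp [hν, Measure.restrict_restrict, Set.compl_inter_self]
  -- I > 0
  have hIpos : 0 < I := by
    rcases lt_or_eq_of_le hI0 with h | h
    · exact h
    have h0 : (∫⁻ x, ENNReal.ofReal (p x ^ s) ∂ν) = 0 := by
      rw [← hIlin, ← h]; simp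
    have hae : (fun x => ENNReal.ofReal (p x ^ s)) =ᵐ[ν] 0 :=
      (lintegral_eq_zero_iff' hpsmeas.ennreal_ofReal).1 h0
    have hae2 : (fun x => ENNReal.ofReal (p x)) =ᵐ[ν] 0 := by
      filter_upwards [hae] with x hx
      simp only [Pi.zero_apply, ENNReal.ofReal_eq_zero] at hx ⊢
      have : p x = 0 := by
        by_contra hne
        have hpx : 0 < p x := lt_of_le_of_ne (hp x) (Ne.symm hne)
        have := Real.rpow_pos_of_pos hpx s
        linarith
      simp [this]
    have hμ0 : μ Set.univ = 0 := by
      rw [hμ, withDensity_apply _ MeasurableSet.univ, Measure.restrict_univ]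
      rw [lintegral_congr_ae hae2]
      simp
    have : (1:ℝ≥0∞) = 0 := by rw [← measure_univ (μ := μ), hμ0]
    simp at this
  -- Step A: measure of Y i under ν bounded by Chebyshev radius
  have hνY : ∀ i, ν (Y i) ≤ ENNReal.ofReal (cM * chebRadius (Y i) ^ m) := by
    intro i
    set rB := chebRadius (Y i) with hrdef
    have hrB : 0 ≤ rB := chebRadius_nonneg _
    have hle : ∀ ε ∈ Set.Ioi (0:ℝ), ν (Y i) ≤ ENNReal.ofReal (cM * (rB + ε)^m) := by
      intro ε hε
      obtain ⟨z, hz⟩ := exists_subset_ball (hYb i) hε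
      calc ν (Y i) = μH[(m : ℝ)] (Y i ∩ M) := Measure.restrict_apply (hYm i)
        _ ≤ μH[(m : ℝ)] (M ∩ ball z (rB + ε)) :=
            measure_mono fun x hx => ⟨hx.2, hz hx.1⟩
        _ ≤ _ := hcball z _ (add_pos_of_nonneg_of_pos hrB hε)
    have cont : Tendsto (fun ε : ℝ => ENNReal.ofReal (cM * (rB+ε)^m)) (nhdsWithin 0 (Set.Ioi 0))
        (nhds (ENNReal.ofReal (cM * rB^m))) := by
      have hc : Continuous fun ε : ℝ => cM * (rB+ε)^m := by continuity
      have := (hc.tendsto 0).mono_left (nhdsWithin_le_nhds (s := Set.Ioi (0:ℝ)))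
      simp only [add_zero] at this
      exact (ENNReal.continuous_ofReal.tendsto _).comp this
    exact ge_of_tendsto cont (eventually_nhdsWithin_of_forall hle)
  -- Step B : main per-set bound
  have key : ∀ i, (μ (Y i)).toReal ≤ I ^ (1/s) * (cM * chebRadius (Y i) ^ m) ^ ((s-1)/s) := by
    intro i
    have hconj : s.HolderConjugate (s/(s-1)) := Real.HolderConjugate.conjExponent hs
    have holder := ENNReal.lintegral_mul_le_Lp_mul_Lq (ν.restrict (Y i)) hconj
      (f := fun x => ENNReal.ofReal (p x)) (g := fun _ => 1)
      (hfmeas.restrict) aemeasurable_const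
    simp only [Pi.mul_apply, mul_one, ENNReal.one_rpow, lintegral_const, one_mul,
      Measure.restrict_apply MeasurableSet.univ, Set.univ_inter] at holder
    have hmuY : μ (Y i) = ∫⁻ x in Y i, ENNReal.ofReal (p x) ∂ν := by
      rw [hμ, withDensity_apply _ (hYm i)]
    have hps_le : (∫⁻ x in Y i, ENNReal.ofReal (p x) ^ s ∂ν) ≤ ENNReal.ofReal I := by
      rw [hIlin]
      refine le_trans (setLIntegral_le_lintegral _ _) (le_of_eq (lintegral_congr fun x => ?_))
      rw [ENNReal.ofReal_rpow_of_nonneg (hp x) hs0.le]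
    have h1 : μ (Y i) ≤ ENNReal.ofReal I ^ (1/s) * ENNReal.ofReal (cM * chebRadius (Y i) ^ m) ^ ((s-1)/s) := by
      rw [hmuY]
      refine le_trans holder (mul_le_mul' ?_ ?_)
      · exact ENNReal.rpow_le_rpow hps_le (by positivity)
      · have : 1/(s/(s-1)) = (s-1)/s := by field_simp
        rw [this]
        exact ENNReal.rpow_le_rpow (hνY i) (by positivity)
    have h2 : ENNReal.ofReal I ^ (1/s) * ENNReal.ofReal (cM * chebRadius (Y i) ^ m) ^ ((s-1)/s)
        = ENNReal.ofReal (I ^ (1/s) * (cM * chebRadius (Y i) ^ m) ^ ((s-1)/s)) := by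
      have hcr : 0 ≤ cM * chebRadius (Y i) ^ m := by
        have := chebRadius_nonneg (Y i); positivity
      rw [ENNReal.ofReal_rpow_of_nonneg hI0 (by positivity),
        ENNReal.ofReal_rpow_of_nonneg hcr (by positivity),
        ← ENNReal.ofReal_mul (by positivity)]
    rw [h2] at h1
    exact ENNReal.toReal_le_of_le_ofReal (by
      have := chebRadius_nonneg (Y i); positivity) h1
  -- Step C : sum of masses at least 1
  have hsum1 : (1:ℝ) ≤ ∑ i : Fin K, (μ (Y i)).toReal := by
    have h1 : (1:ℝ≥0∞) ≤ ∑ i : Fin K, μ (Y i) := by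
      have hu : μ Set.univ ≤ μ M + μ Mᶜ := by
        rw [← Set.union_compl_self M]; exact measure_union_le _ _
      rw [hMc, add_zero] at hu
      calc (1:ℝ≥0∞) = μ Set.univ := (measure_univ).symm
        _ ≤ μ M := hu
        _ ≤ μ (⋃ i, Y i) := measure_mono hYcov
        _ ≤ ∑ i : Fin K, μ (Y i) := measure_iUnion_fintype_le _ _
    have h2 : (∑ i : Fin K, μ (Y i)).toReal = ∑ i : Fin K, (μ (Y i)).toReal :=
      ENNReal.toReal_sum fun i _ => measure_ne_top μ _
    have h3 : ((1:ℝ≥0∞)).toReal ≤ (∑ i : Fin K, μ (Y i)).toReal := by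
      apply ENNReal.toReal_mono _ h1
      rw [← h2] at *
      exact (ENNReal.sum_lt_top.2 fun i _ => measure_lt_top μ _).ne
    rw [h2] at h3
    simpa using h3
  have hK : 0 < K := by
    rcases Nat.eq_zero_or_pos K with h | h
    · subst h; simp at hsum1; linarith
    · exact h
  have hKpos : (0:ℝ) < K := by exact_mod_cast hK
  have hm' : (m:ℝ) ≠ 0 := hm0.ne'
  have hs' : s ≠ 0 := hs0.ne'
  have hs1' : s - 1 ≠ 0 := hs1.ne'
  have h1s : 1 - s ≠ 0 := by linarith
  set t := 2*s/((m:ℝ)*(s-1)) with ht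
  have ht0 : 0 < t := by positivity
  have ha0 : ∀ i, 0 ≤ (μ (Y i)).toReal := fun i => ENNReal.toReal_nonneg
  have hr0 : ∀ i : Fin K, 0 ≤ chebRadius (Y i) := fun i => chebRadius_nonneg _
  set C := I ^ (1/s) * cM ^ ((s-1)/s) with hC
  have hC0 : 0 < C := by positivity
  -- per-index power bound
  have key2 : ∀ i, (μ (Y i)).toReal ^ t ≤ C ^ t * chebRadius (Y i) ^ (2:ℝ) := by
    intro i
    have h1 : (μ (Y i)).toReal ≤ C * chebRadius (Y i) ^ ((m:ℝ)*(s-1)/s) := by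
      calc (μ (Y i)).toReal ≤ I ^ (1/s) * (cM * chebRadius (Y i) ^ m) ^ ((s-1)/s) := key i
        _ = C * chebRadius (Y i) ^ ((m:ℝ)*(s-1)/s) := by
          rw [Real.mul_rpow hcM.le (pow_nonneg (hr0 i) m), ← Real.rpow_natCast (chebRadius (Y i)) m,
            ← Real.rpow_mul (hr0 i), hC, ← mul_div_assoc]
          ring
    have het : (m:ℝ)*(s-1)/s * t = 2 := by rw [ht]; field_simp
    calc (μ (Y i)).toReal ^ t ≤ (C * chebRadius (Y i) ^ ((m:ℝ)*(s-1)/s)) ^ t :=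
        Real.rpow_le_rpow (ha0 i) h1 ht0.le
      _ = C ^ t * chebRadius (Y i) ^ (2:ℝ) := by
        rw [Real.mul_rpow hC0.le (Real.rpow_nonneg (hr0 i) _), ← Real.rpow_mul (hr0 i), het]
  -- sum bound
  have main1 : ∑ i : Fin K, (μ (Y i)).toReal ^ ((1:ℝ)+t)
      ≤ C ^ t * ∑ i : Fin K, (μ (Y i)).toReal * chebRadius (Y i) ^ 2 := by
    rw [Finset.mul_sum]
    apply Finset.sum_le_sum
    intro i _
    have hsq : chebRadius (Y i) ^ (2:ℝ) = chebRadius (Y i) ^ 2 := by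
      rw [← Real.rpow_natCast (chebRadius (Y i)) 2]; norm_num
    rw [Real.rpow_add' (ha0 i) (by positivity), Real.rpow_one]
    calc (μ (Y i)).toReal * (μ (Y i)).toReal ^ t
        ≤ (μ (Y i)).toReal * (C ^ t * chebRadius (Y i) ^ (2:ℝ)) :=
          mul_le_mul_of_nonneg_left (key2 i) (ha0 i)
      _ = C ^ t * ((μ (Y i)).toReal * chebRadius (Y i) ^ 2) := by rw [hsq]; ring
  -- Jensen
  have jensen : (∑ i : Fin K, (1/(K:ℝ)) * (μ (Y i)).toReal) ^ ((1:ℝ)+t)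
      ≤ ∑ i : Fin K, (1/(K:ℝ)) * (μ (Y i)).toReal ^ ((1:ℝ)+t) :=
    Real.rpow_arith_mean_le_arith_mean_rpow Finset.univ _ _ (fun i _ => by positivity)
      (by simp [Finset.sum_const, Finset.card_univ]; field_simp) (fun i _ => ha0 i)
      (by linarith)
  have h4 : (K:ℝ)^(-t) ≤ ∑ i : Fin K, (μ (Y i)).toReal ^ ((1:ℝ)+t) := by
    have hLge : ((1:ℝ)/K)^((1:ℝ)+t) ≤ (∑ i : Fin K, (1/(K:ℝ)) * (μ (Y i)).toReal) ^ ((1:ℝ)+t) := by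
      apply Real.rpow_le_rpow (by positivity) _ (by linarith)
      rw [← Finset.mul_sum]
      calc (1:ℝ)/K = (1/K) * 1 := (mul_one _).symm
        _ ≤ (1/K) * ∑ i : Fin K, (μ (Y i)).toReal :=
          mul_le_mul_of_nonneg_left hsum1 (by positivity)
    have hRsum : ∑ i : Fin K, (1/(K:ℝ)) * (μ (Y i)).toReal ^ ((1:ℝ)+t)
        = (1/(K:ℝ)) * ∑ i : Fin K, (μ (Y i)).toReal ^ ((1:ℝ)+t) := (Finset.mul_sum _ _ _).symm
    have h5 : ((1:ℝ)/K)^((1:ℝ)+t) ≤ (1/(K:ℝ)) * ∑ i : Fin K, (μ (Y i)).toReal ^ ((1:ℝ)+t) := by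
      rw [← hRsum]; exact le_trans hLge jensen
    have h6 : (K:ℝ) * ((1:ℝ)/K)^((1:ℝ)+t) = (K:ℝ)^(-t) := by
      rw [one_div, Real.inv_rpow hKpos.le, ← Real.rpow_neg hKpos.le]
      nth_rewrite 1 [show (K:ℝ) = (K:ℝ)^(1:ℝ) from (Real.rpow_one _).symm]
      rw [← Real.rpow_add hKpos]
      congr 1; ring
    calc (K:ℝ)^(-t) = (K:ℝ) * ((1:ℝ)/K)^((1:ℝ)+t) := h6.symm
      _ ≤ (K:ℝ) * ((1/(K:ℝ)) * ∑ i : Fin K, (μ (Y i)).toReal ^ ((1:ℝ)+t)) :=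
        mul_le_mul_of_nonneg_left h5 hKpos.le
      _ = ∑ i : Fin K, (μ (Y i)).toReal ^ ((1:ℝ)+t) := by field_simp
  -- combine
  have final1 : C^(-t) * (K:ℝ)^(-t) ≤ ∑ i : Fin K, (μ (Y i)).toReal * chebRadius (Y i) ^ 2 := by
    have h5 : C^(-t) * (K:ℝ)^(-t) ≤ C^(-t) * ∑ i : Fin K, (μ (Y i)).toReal ^ ((1:ℝ)+t) :=
      mul_le_mul_of_nonneg_left h4 (by positivity)
    have h6 : C^(-t) * ∑ i : Fin K, (μ (Y i)).toReal ^ ((1:ℝ)+t)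
        ≤ C^(-t) * (C^t * ∑ i : Fin K, (μ (Y i)).toReal * chebRadius (Y i) ^ 2) :=
      mul_le_mul_of_nonneg_left main1 (by positivity)
    have h7 : C^(-t) * (C^t * ∑ i : Fin K, (μ (Y i)).toReal * chebRadius (Y i) ^ 2)
        = ∑ i : Fin K, (μ (Y i)).toReal * chebRadius (Y i) ^ 2 := by
      rw [← mul_assoc, ← Real.rpow_add hC0]
      norm_num
    linarith
  -- identify the left-hand side
  have e1 : C^(-t) = I ^ (-(2:ℝ)/((m:ℝ)*(s-1))) * cM ^ (-(2:ℝ)/(m:ℝ)) := by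
    rw [hC, Real.mul_rpow (by positivity) (by positivity), ← Real.rpow_mul hI0,
      ← Real.rpow_mul hcM.le]
    congr 1
    · congr 1; rw [ht]; field_simp
    · congr 1; rw [ht]; field_simp
  have e2 : Real.exp ((2/(m:ℝ))*((1/(1-s))*Real.log I)) = I ^ (-(2:ℝ)/((m:ℝ)*(s-1))) := by
    rw [Real.rpow_def_of_pos hIpos]
    congr 1
    field_simp
    ring
  have e3 : -(2*s)/((m:ℝ)*(s-1)) = -t := by rw [ht]; ring
  calc cM ^ (-(2:ℝ) / (m:ℝ)) * Real.exp ((2 / (m:ℝ)) * ((1 / (1 - s)) * Real.log I)) *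
        (K : ℝ) ^ (-(2 * s) / ((m:ℝ) * (s - 1)))
      = C^(-t) * (K:ℝ)^(-t) := by rw [e1, e2, e3]; ring
    _ ≤ _ := final1
end
end

section
/- Trajectory entropy dominates initial-condition entropy: let X ⊆ ℝⁿ be compact, let f : X → X be Lipschitz continuous and differentiable at every point of X, and let ξ₀ be a random vector whose law μ₀ is concentrated on X and absolutely continuous with respect to Lebesgue measure, with density p₀ having finite generalized entropy h(ξ₀) = −∫_X p₀ log p₀ dx and finite Rényi entropies h_s(ξ₀) = (1/(1−s))·log ∫_X p₀^s dx for s ∈ (1,∞). Fix l ≥ 1, let μ_ξ be the pushforward of μ₀ under b_l, and let h(ξ) and h_s(ξ) denote the generalized entropy and order-s Rényi entropy of μ_ξ with respect to ℋ^n restricted to B_l = b_l(X). Then h(ξ) ≥ h(ξ₀), and h_s(ξ) ≥ h_s(ξ₀) for every s ∈ (1,∞). -/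
open MeasureTheory Metric Function

noncomputable section

open scoped ENNReal NNReal

/-- The trajectory map `b_l(x) = (x, f(x), …, f^{l-1}(x)) ∈ ℝ^{nl}`. -/
def trajMap (n l : ℕ) (f : EuclideanSpace ℝ (Fin n) → EuclideanSpace ℝ (Fin n))
    (x : EuclideanSpace ℝ (Fin n)) : EuclideanSpace ℝ (Fin l × Fin n) :=
  WithLp.toLp 2 (fun p : Fin l × Fin n => f^[(p.1 : ℕ)] x p.2)

lemma volume_le_hausdorff (n : ℕ) :
    (volume : Measure (EuclideanSpace ℝ (Fin n))) ≤ μH[(n : ℝ)] := by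
  rw [Measure.le_iff]
  intro s hs
  set e := (MeasurableEquiv.toLp 2 (Fin n → ℝ)).symm with he
  have h1 : (volume : Measure (EuclideanSpace ℝ (Fin n))) s = volume (⇑e '' s) := by
    rw [Set.image_eq_preimage_of_inverse e.symm_apply_apply e.apply_symm_apply]
    exact ((MeasurePreserving.symm _ (EuclideanSpace.volume_preserving_symm_measurableEquiv_toLp (Fin n))).measure_preimage
      hs.nullMeasurableSet).symm
  have h2 : (volume : Measure (Fin n → ℝ)) (⇑e '' s) = μH[(n : ℝ)] (⇑e '' s) := by
    have := MeasureTheory.hausdorffMeasure_pi_real (ι := Fin n)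
    rw [Fintype.card_fin] at this
    rw [this]
  have h3 : μH[(n : ℝ)] (⇑e '' s) ≤ μH[(n : ℝ)] s := by
    have hl : LipschitzWith 1 ⇑e := PiLp.lipschitzWith_ofLp 2 _
    simpa using hl.hausdorffMeasure_image_le (by positivity) s
  rw [h1, h2]; exact h3

lemma hausdorff_compact_lt_top (n : ℕ) (X : Set (EuclideanSpace ℝ (Fin n))) (hX : IsCompact X) :
    μH[(n : ℝ)] X < ⊤ := by
  set e := (MeasurableEquiv.toLp 2 (Fin n → ℝ)).symm with he
  have hsymm : LipschitzWith ((Fintype.card (Fin n) : NNReal) ^ ((1:ℝ≥0∞) / 2).toReal) ⇑e.symm :=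
    (PiLp.antilipschitzWith_ofLp 2 (fun _ : Fin n => ℝ)).to_rightInverse e.apply_symm_apply
  have himg : X = ⇑e.symm '' (⇑e '' X) := by
    rw [← Set.image_comp]; simp
  have h1 := hsymm.hausdorffMeasure_image_le (d := (n : ℝ)) (by positivity) (⇑e '' X)
  rw [← himg] at h1
  have h2 : μH[(n : ℝ)] (⇑e '' X) = volume (⇑e '' X) := by
    have := MeasureTheory.hausdorffMeasure_pi_real (ι := Fin n)
    rw [Fintype.card_fin] at this
    rw [this]
  have hcomp : IsCompact (⇑e '' X) := hX.image (by
    exact (PiLp.lipschitzWith_ofLp 2 (fun _ : Fin n => ℝ)).continuous)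
  calc μH[(n : ℝ)] X ≤ _ := h1
    _ < ⊤ := by
        rw [h2]
        refine ENNReal.mul_lt_top ?_ hcomp.measure_lt_top
        exact ENNReal.rpow_lt_top_of_nonneg (by positivity) ENNReal.coe_ne_top

-- real sub-lemma: t * max (-log t) 0 ≤ (exp 1)⁻¹ for t ≥ 0
lemma mul_neg_log_le (t : ℝ) (ht : 0 ≤ t) :
    t * max (- Real.log t) 0 ≤ (Real.exp 1)⁻¹ := by
  rcases eq_or_lt_of_le ht with h | h
  · simp [← h]
    positivity
  rcases le_or_gt 0 (Real.log t) with hl | hl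
  · rw [max_eq_right (by linarith)]
    simp; positivity
  · rw [max_eq_left (by linarith)]
    have h1 : Real.log (t⁻¹) ≤ t⁻¹ * (Real.exp 1)⁻¹ := by
      have h2 := Real.log_le_sub_one_of_pos (x := t⁻¹ * (Real.exp 1)⁻¹) (by positivity)
      rw [Real.log_mul (by positivity) (by positivity), Real.log_inv (Real.exp 1),
        Real.log_exp] at h2
      linarith
    have h3 : - Real.log t = Real.log t⁻¹ := (Real.log_inv t).symm
    rw [h3]
    calc t * Real.log t⁻¹ ≤ t * (t⁻¹ * (Real.exp 1)⁻¹) := by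
          exact mul_le_mul_of_nonneg_left h1 ht
      _ = (Real.exp 1)⁻¹ := by field_simp

lemma ennreal_mul_neg_log_le (c : ℝ≥0∞) (hc : c ≠ ⊤) :
    c * ENNReal.ofReal (max (- Real.log c.toReal) 0) ≤ ENNReal.ofReal (Real.exp 1)⁻¹ := by
  have ht : (0:ℝ) ≤ c.toReal := ENNReal.toReal_nonneg
  nth_rewrite 1 [← ENNReal.ofReal_toReal hc]
  rw [← ENNReal.ofReal_mul ht]
  exact ENNReal.ofReal_le_ofReal (mul_neg_log_le _ ht)


theorem core {α β : Type*} [MeasurableSpace α] [MeasurableSpace β]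
    (ρ : Measure α) (ν : Measure β) [IsFiniteMeasure ν]
    (p : α → ℝ) (hpm : Measurable p) (hp0 : ∀ a, 0 ≤ p a)
    (hprob : IsProbabilityMeasure (ρ.withDensity (fun a => ENNReal.ofReal (p a))))
    (T : α → β) (hT : Measurable T)
    (P : β → α) (hPm : Measurable P) (hPT : ∀ᵐ a ∂ρ, P (T a) = a)
    (hdom : Measure.map T ρ ≤ ν) :
    (Integrable (fun a => p a * Real.log (p a)) ρ →
      ∫ y, ((Measure.map T (ρ.withDensity (fun a => ENNReal.ofReal (p a)))).rnDeriv ν y).toReal *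
        Real.log (((Measure.map T (ρ.withDensity (fun a => ENNReal.ofReal (p a)))).rnDeriv ν y).toReal) ∂ν
      ≤ ∫ a, p a * Real.log (p a) ∂ρ) ∧
    (∀ s : ℝ, 1 < s → Integrable (fun a => p a ^ s) ρ →
      (0 < ∫ y, ((Measure.map T (ρ.withDensity (fun a => ENNReal.ofReal (p a)))).rnDeriv ν y).toReal ^ s ∂ν ∧
       ∫ y, ((Measure.map T (ρ.withDensity (fun a => ENNReal.ofReal (p a)))).rnDeriv ν y).toReal ^ s ∂ν
         ≤ ∫ a, p a ^ s ∂ρ)) := by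
  set μ₀ : Measure α := ρ.withDensity (fun a => ENNReal.ofReal (p a)) with hμ₀def
  haveI : IsProbabilityMeasure μ₀ := hprob
  set μ : Measure β := Measure.map T μ₀ with hμdef
  haveI : IsProbabilityMeasure μ := Measure.isProbabilityMeasure_map hT.aemeasurable
  set q : β → ℝ≥0∞ := μ.rnDeriv ν with hqdef
  have hqm : Measurable q := Measure.measurable_rnDeriv μ ν
  set G : β → ℝ≥0∞ := fun y => ENNReal.ofReal (p (P y)) with hGdef
  have hGm : Measurable G := (hpm.comp hPm).ennreal_ofReal
  have hμ₀ac : μ₀ ≪ ρ := withDensity_absolutelyContinuous _ _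
  have hPTμ₀ : ∀ᵐ a ∂μ₀, P (T a) = a := hμ₀ac.ae_le hPT
  -- (1) μ ≤ ν.withDensity G
  have hle : μ ≤ ν.withDensity G := by
    rw [Measure.le_iff]
    intro A hA
    rw [hμdef, Measure.map_apply hT hA, hμ₀def, withDensity_apply _ (hT hA),
      withDensity_apply _ hA]
    have e1 : ∫⁻ a in T ⁻¹' A, ENNReal.ofReal (p a) ∂ρ = ∫⁻ a in T ⁻¹' A, G (T a) ∂ρ := by
      refine lintegral_congr_ae (ae_restrict_of_ae ?_)
      filter_upwards [hPT] with a ha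
      rw [hGdef]; simp only [ha]
    rw [e1, ← setLIntegral_map hA hGm hT]
    exact lintegral_mono' (Measure.restrict_mono Set.Subset.rfl hdom) le_rfl
  have hac : μ ≪ ν :=
    (Measure.absolutelyContinuous_of_le hle).trans (withDensity_absolutelyContinuous _ _)
  have hwd : ν.withDensity q = μ := Measure.withDensity_rnDeriv_eq μ ν hac
  have hqG : q ≤ᵐ[ν] G := by
    refine ae_le_of_forall_setLIntegral_le_of_sigmaFinite hqm (fun A hA _ => ?_)
    rw [← withDensity_apply _ hA, hwd, ← withDensity_apply _ hA]
    exact Measure.le_iff'.1 hle A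
  have hqltν : ∀ᵐ y ∂ν, q y < ⊤ := Measure.rnDeriv_lt_top μ ν
  have hqposμ : ∀ᵐ y ∂μ, 0 < q y := Measure.rnDeriv_pos hac
  have hqGμ : ∀ᵐ y ∂μ, q y ≤ G y := hac.ae_le hqG
  have hqltμ : ∀ᵐ y ∂μ, q y < ⊤ := hac.ae_le hqltν
  have hμ₀pull : ∀ᵐ a ∂μ₀, q (T a) ≤ ENNReal.ofReal (p a) ∧ 0 < q (T a) ∧ q (T a) < ⊤ := by
    have h1 : ∀ᵐ y ∂μ, q y ≤ G y ∧ 0 < q y ∧ q y < ⊤ := by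
      filter_upwards [hqGμ, hqposμ, hqltμ] with y h1 h2 h3; exact ⟨h1, h2, h3⟩
    have h2 := ae_of_ae_map hT.aemeasurable h1
    filter_upwards [h2, hPTμ₀] with a ha hpa
    rw [hGdef] at ha; simp only [hpa] at ha; exact ha
  have hqfm : Measurable (fun y => (q y).toReal) := hqm.ennreal_toReal
  constructor
  · -- entropy part
    intro hent
    -- μ₀ = ρ.withDensity (coe ∘ toNNReal ∘ p)
    have hμ₀' : μ₀ = ρ.withDensity (fun a => ((p a).toNNReal : ℝ≥0∞)) := rfl
    have hofin : ∀ᵐ a ∂ρ, ENNReal.ofReal (p a) < ⊤ := ae_of_all _ fun a => ENNReal.ofReal_lt_top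
    have hIlogp : Integrable (fun a => Real.log (p a)) μ₀ := by
      rw [hμ₀def, integrable_withDensity_iff_integrable_smul' hpm.ennreal_ofReal hofin]
      refine hent.congr (ae_of_all _ fun a => ?_)
      simp [ENNReal.toReal_ofReal (hp0 a), smul_eq_mul]
    have hInt_eq : ∫ a, Real.log (p a) ∂μ₀ = ∫ a, p a * Real.log (p a) ∂ρ := by
      rw [hμ₀', integral_withDensity_eq_integral_smul hpm.real_toNNReal]
      refine integral_congr_ae (ae_of_all _ fun a => ?_)
      simp [NNReal.smul_def, Real.coe_toNNReal _ (hp0 a)]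
    set u : β → ℝ := fun y => Real.log (q y).toReal with hudef
    have hum : Measurable u := hqfm.log
    -- Integrability of u w.r.t. μ
    have hIu : Integrable u μ := by
      refine ⟨hum.aestronglyMeasurable, ?_⟩
      rw [hasFiniteIntegral_iff_norm]
      have habs : ∀ y : β, ENNReal.ofReal ‖u y‖ =
          ENNReal.ofReal (max (u y) 0) + ENNReal.ofReal (max (-u y) 0) := by
        intro y
        rcases le_total (u y) 0 with h | h
        · rw [Real.norm_eq_abs, abs_of_nonpos h, max_eq_right h,
            max_eq_left (by linarith), ENNReal.ofReal_zero, zero_add]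
        · rw [Real.norm_eq_abs, abs_of_nonneg h, max_eq_left h,
            max_eq_right (by linarith), ENNReal.ofReal_zero, add_zero]
      calc ∫⁻ y, ENNReal.ofReal ‖u y‖ ∂μ
          = ∫⁻ y, (ENNReal.ofReal (max (u y) 0) + ENNReal.ofReal (max (-u y) 0)) ∂μ := by
            exact lintegral_congr habs
        _ = (∫⁻ y, ENNReal.ofReal (max (u y) 0) ∂μ)
            + ∫⁻ y, ENNReal.ofReal (max (-u y) 0) ∂μ := by
            exact lintegral_add_left (hum.max measurable_const).ennreal_ofReal _
        _ < ⊤ := by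
            refine ENNReal.add_lt_top.2 ⟨?_, ?_⟩
            · -- positive part: bounded by log of density p composed with P
              have hb : ∫⁻ y, ENNReal.ofReal (max (u y) 0) ∂μ
                  ≤ ∫⁻ y, ENNReal.ofReal (max (Real.log (p (P y))) 0) ∂μ := by
                refine lintegral_mono_ae ?_
                filter_upwards [hqGμ] with y hy
                refine ENNReal.ofReal_le_ofReal ?_
                rcases eq_or_lt_of_le (ENNReal.toReal_nonneg (a := q y)) with h0 | h0
                · rw [hudef]; simp only [← h0, Real.log_zero, max_self]
                  exact le_max_right _ _
                · have hgle : (q y).toReal ≤ p (P y) := by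
                    have := ENNReal.toReal_mono ENNReal.ofReal_ne_top hy
                    rwa [ENNReal.toReal_ofReal (hp0 _)] at this
                  exact max_le_max (Real.log_le_log h0 hgle) le_rfl
              have hb2 : ∫⁻ y, ENNReal.ofReal (max (Real.log (p (P y))) 0) ∂μ
                  = ∫⁻ a, ENNReal.ofReal (max (Real.log (p (P (T a)))) 0) ∂μ₀ := by
                rw [hμdef]
                exact lintegral_map (((hpm.comp hPm).log.max measurable_const).ennreal_ofReal :
                  Measurable fun y => ENNReal.ofReal (Real.log (p (P y)) ⊔ 0)) hT
              have hb3 : ∫⁻ a, ENNReal.ofReal (max (Real.log (p (P (T a)))) 0) ∂μ₀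
                  = ∫⁻ a, ENNReal.ofReal (max (Real.log (p a)) 0) ∂μ₀ := by
                refine lintegral_congr_ae ?_
                filter_upwards [hPTμ₀] with a ha
                rw [ha]
              have hb4 : ∫⁻ a, ENNReal.ofReal (max (Real.log (p a)) 0) ∂μ₀
                  ≤ ∫⁻ a, ENNReal.ofReal ‖Real.log (p a)‖ ∂μ₀ := by
                refine lintegral_mono fun a => ?_
                rw [Real.norm_eq_abs]
                exact ENNReal.ofReal_le_ofReal (max_le (le_abs_self _) (abs_nonneg _))
              have := hIlogp.2
              rw [hasFiniteIntegral_iff_norm] at this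
              exact lt_of_le_of_lt (hb.trans ((hb2.trans hb3).le.trans hb4)) this
            · -- negative part: x log x ≥ -1/e trick
              have hb : ∫⁻ y, ENNReal.ofReal (max (-u y) 0) ∂μ
                  = ∫⁻ y, q y * ENNReal.ofReal (max (-u y) 0) ∂ν := by
                rw [← hwd, lintegral_withDensity_eq_lintegral_mul ν hqm
                  (show Measurable fun y => ENNReal.ofReal (max (-u y) 0) from
                    (hum.neg.max measurable_const).ennreal_ofReal)]
                rfl
              have hb2 : ∫⁻ y, q y * ENNReal.ofReal (max (-u y) 0) ∂ν
                  ≤ ∫⁻ _, ENNReal.ofReal (Real.exp 1)⁻¹ ∂ν := by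
                refine lintegral_mono_ae ?_
                filter_upwards [hqltν] with y hy
                exact ennreal_mul_neg_log_le _ hy.ne
              rw [hb]
              refine lt_of_le_of_lt hb2 ?_
              rw [lintegral_const]
              exact ENNReal.mul_lt_top ENNReal.ofReal_lt_top (measure_lt_top _ _)
    -- transfer to μ₀ and compare
    have hIuT : Integrable (fun a => u (T a)) μ₀ := by
      have h := (integrable_map_measure (μ := μ₀) hum.aestronglyMeasurable hT.aemeasurable).1
      rw [← hμdef] at h
      exact h hIu
    have hcomp : ∫ a, u (T a) ∂μ₀ ≤ ∫ a, Real.log (p a) ∂μ₀ := by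
      refine integral_mono_ae hIuT hIlogp ?_
      filter_upwards [hμ₀pull] with a ⟨h1, h2, h3⟩
      have hgpos : 0 < (q (T a)).toReal := ENNReal.toReal_pos h2.ne' h3.ne
      have hgle : (q (T a)).toReal ≤ p a := by
        have := ENNReal.toReal_mono ENNReal.ofReal_ne_top h1
        rwa [ENNReal.toReal_ofReal (hp0 _)] at this
      exact Real.log_le_log hgpos hgle
    have hLHS : ∫ y, (q y).toReal * Real.log (q y).toReal ∂ν = ∫ a, u (T a) ∂μ₀ := by
      have e1 : ∫ y, u y ∂μ = ∫ a, u (T a) ∂μ₀ := by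
        rw [hμdef]
        exact integral_map hT.aemeasurable (by rw [← hμdef]; exact hum.aestronglyMeasurable)
      have e2 : ∫ y, u y ∂μ = ∫ y, (q y).toReal * u y ∂ν := by
        have hcg : q =ᵐ[ν] fun y => ((q y).toNNReal : ℝ≥0∞) := by
          filter_upwards [hqltν] with y hy
          rw [ENNReal.coe_toNNReal hy.ne]
        rw [← hwd, withDensity_congr_ae hcg,
          integral_withDensity_eq_integral_smul hqm.ennreal_toNNReal u]
        refine integral_congr_ae (ae_of_all _ fun y => ?_)
        simp [NNReal.smul_def, ENNReal.toReal]
      rw [← e1, e2]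
    rw [hLHS, ← hInt_eq]
    exact hcomp
  · intro s hs hint
    have hs0 : (0:ℝ) ≤ s - 1 := by linarith
    have hspos : (0:ℝ) < s := by linarith
    set I : ℝ≥0∞ := ∫⁻ y, q y ^ s ∂ν with hIdef
    set J : ℝ≥0∞ := ∫⁻ a, ENNReal.ofReal (p a ^ s) ∂ρ with hJdef
    have hqsm : Measurable fun y => q y ^ (s-1) := hqm.pow_const _
    have e1 : I = ∫⁻ y, q y ^ (s-1) ∂μ := by
      rw [← hwd, lintegral_withDensity_eq_lintegral_mul ν hqm hqsm, hIdef]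
      refine lintegral_congr fun y => ?_
      simp only [Pi.mul_apply]
      rcases eq_or_ne (q y) 0 with h0 | h0
      · rw [h0, ENNReal.zero_rpow_of_pos (by linarith), ENNReal.zero_rpow_of_pos (by linarith),
          mul_zero]
      rcases eq_or_ne (q y) ⊤ with htop | htop
      · rw [htop, ENNReal.top_rpow_of_pos (by linarith), ENNReal.top_rpow_of_pos (by linarith),
          ENNReal.top_mul_top]
      · nth_rewrite 2 [← ENNReal.rpow_one (q y)]
        rw [← ENNReal.rpow_add _ _ h0 htop]
        norm_num
    have e2 : ∫⁻ y, q y ^ (s-1) ∂μ ≤ ∫⁻ y, G y ^ (s-1) ∂μ := by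
      refine lintegral_mono_ae ?_
      filter_upwards [hqGμ] with y hy
      exact ENNReal.rpow_le_rpow hy hs0
    have e3 : ∫⁻ y, G y ^ (s-1) ∂μ = ∫⁻ a, (ENNReal.ofReal (p a)) ^ (s-1) ∂μ₀ := by
      rw [hμdef, lintegral_map (hGm.pow_const _) hT]
      refine lintegral_congr_ae ?_
      filter_upwards [hPTμ₀] with a ha
      rw [hGdef]; simp only [ha]
    have e4 : ∫⁻ a, (ENNReal.ofReal (p a)) ^ (s-1) ∂μ₀ = J := by
      rw [hμ₀def, lintegral_withDensity_eq_lintegral_mul ρ hpm.ennreal_ofReal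
        (hpm.ennreal_ofReal.pow_const _), hJdef]
      refine lintegral_congr fun a => ?_
      simp only [Pi.mul_apply]
      have hpow : ENNReal.ofReal (p a) ^ (s-1) = ENNReal.ofReal (p a ^ (s-1)) :=
        ENNReal.ofReal_rpow_of_nonneg (hp0 a) hs0
      rw [hpow, ← ENNReal.ofReal_mul (hp0 a)]
      congr 1
      rcases eq_or_lt_of_le (hp0 a) with h0 | h0
      · rw [← h0, Real.zero_rpow (by linarith), Real.zero_rpow (by linarith), mul_zero]
      · nth_rewrite 1 [← Real.rpow_one (p a)]
        rw [← Real.rpow_add h0]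
        norm_num
    have hIJ : I ≤ J := by
      rw [e1]
      exact le_trans e2 (le_of_eq (e3.trans e4))
    have hJfin : J < ⊤ := by
      have h1 : J ≤ ∫⁻ a, ENNReal.ofReal ‖p a ^ s‖ ∂ρ := by
        refine lintegral_mono fun a => ENNReal.ofReal_le_ofReal ?_
        rw [Real.norm_eq_abs]; exact le_abs_self _
      have h2 := hint.2
      rw [hasFiniteIntegral_iff_norm] at h2
      exact lt_of_le_of_lt h1 h2
    have hIpos : 0 < I := by
      rcases (zero_le : 0 ≤ I).lt_or_eq with h | h
      · exact h
      exfalso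
      have hI0 : I = 0 := h.symm
      rw [hIdef] at hI0
      have hq0 : ∀ᵐ y ∂ν, q y ^ s = 0 := (lintegral_eq_zero_iff (hqm.pow_const _)).1 hI0
      have hq0' : q =ᵐ[ν] 0 := by
        filter_upwards [hq0] with y hy
        rcases (ENNReal.rpow_eq_zero_iff).1 hy with ⟨h1, _⟩ | ⟨_, h2⟩
        · exact h1
        · linarith
      have hμ0 : μ Set.univ = 0 := by
        rw [← hwd, withDensity_apply _ MeasurableSet.univ, Measure.restrict_univ,
          lintegral_congr_ae hq0']
        simp
      rw [measure_univ] at hμ0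
      exact one_ne_zero hμ0
    have hconv1 : ∫ y, (q y).toReal ^ s ∂ν = I.toReal := by
      rw [integral_eq_lintegral_of_nonneg_ae
        (ae_of_all _ fun y => Real.rpow_nonneg ENNReal.toReal_nonneg s)
        ((hqfm.pow_const _).aestronglyMeasurable)]
      congr 1
      refine lintegral_congr_ae ?_
      filter_upwards [hqltν] with y hy
      rw [ENNReal.toReal_rpow, ENNReal.ofReal_toReal
        (ENNReal.rpow_lt_top_of_nonneg (by linarith) hy.ne).ne]
    have hconv2 : ∫ a, p a ^ s ∂ρ = J.toReal := by
      rw [integral_eq_lintegral_of_nonneg_ae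
        (ae_of_all _ fun a => Real.rpow_nonneg (hp0 a) s) hint.1]
    constructor
    · rw [hconv1]
      exact ENNReal.toReal_pos hIpos.ne' (lt_of_le_of_lt hIJ hJfin).ne
    · rw [hconv1, hconv2]
      exact ENNReal.toReal_mono hJfin.ne hIJ

lemma euclid_coord_dist_le {ι : Type*} [Fintype ι] (w v : EuclideanSpace ℝ ι) (i : ι) :
    dist (w i) (v i) ≤ dist w v := by
  rw [EuclideanSpace.dist_eq]
  have h : dist (w i) (v i) = Real.sqrt (dist (w i) (v i) ^ 2) :=
    (Real.sqrt_sq dist_nonneg).symm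
  rw [h]
  apply Real.sqrt_le_sqrt
  exact Finset.single_le_sum (f := fun j => dist (w j) (v j) ^ 2)
    (fun j _ => sq_nonneg _) (Finset.mem_univ i)

example (n l : ℕ) (hl : 1 ≤ l) : True := trivial

-- Projection on first block
noncomputable def projMap (n l : ℕ) (i0 : Fin l)
    (y : EuclideanSpace ℝ (Fin l × Fin n)) : EuclideanSpace ℝ (Fin n) :=
  WithLp.toLp 2 (fun j => y (i0, j))

lemma proj_lipschitz (n l : ℕ) (i0 : Fin l) :
    LipschitzWith 1 (projMap n l i0) := by
  refine LipschitzWith.of_dist_le_mul fun y z => ?_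
  rw [NNReal.coe_one, one_mul]
  have h1 := EuclideanSpace.dist_eq (𝕜 := ℝ) (projMap n l i0 y) (projMap n l i0 z)
  have h2 := EuclideanSpace.dist_eq y z
  refine le_trans (le_of_eq h1) ?_
  rw [h2]
  apply Real.sqrt_le_sqrt
  show (∑ j : Fin n, dist (y (i0, j)) (z (i0, j)) ^ 2) ≤ _
  have hinj : Function.Injective (fun j : Fin n => ((i0, j) : Fin l × Fin n)) := by
    intro a b h; exact (Prod.mk.injEq _ _ _ _ ▸ h).2
  calc ∑ j : Fin n, dist (y (i0, j)) (z (i0, j)) ^ 2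
      = ∑ q ∈ Finset.univ.image (fun j : Fin n => ((i0, j) : Fin l × Fin n)),
          dist (y q) (z q) ^ 2 := by
        rw [Finset.sum_image (fun a _ b _ h => hinj h)]
    _ ≤ ∑ q : Fin l × Fin n, dist (y q) (z q) ^ 2 :=
        Finset.sum_le_sum_of_subset_of_nonneg (Finset.subset_univ _)
          (fun _ _ _ => sq_nonneg _)



lemma proj_trajMap (n l : ℕ) (hl : 0 < l)
    (f : EuclideanSpace ℝ (Fin n) → EuclideanSpace ℝ (Fin n)) (x : EuclideanSpace ℝ (Fin n)) :
    projMap n l ⟨0, hl⟩ (trajMap n l f x) = x := by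
  ext j
  simp [projMap, trajMap]

lemma trajMap_lipschitzOnWith (n l : ℕ)
    (X : Set (EuclideanSpace ℝ (Fin n)))
    (f : EuclideanSpace ℝ (Fin n) → EuclideanSpace ℝ (Fin n)) (hfX : Set.MapsTo f X X)
    (L : ℝ) (hL : 0 < L) (hfLip : ∀ x ∈ X, ∀ y ∈ X, ‖f x - f y‖ ≤ L * ‖x - y‖) :
    LipschitzOnWith (Real.toNNReal (Real.sqrt (l * n) * max 1 L ^ l)) (trajMap n l f) X := by
  have hML : (1:ℝ) ≤ max 1 L := le_max_left _ _
  have hiter : ∀ k : ℕ, ∀ x ∈ X, ∀ y ∈ X,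
      dist (f^[k] x) (f^[k] y) ≤ max 1 L ^ k * dist x y := by
    intro k
    induction k with
    | zero => intro x _ y _; simp
    | succ k ih =>
      intro x hx y hy
      rw [Function.iterate_succ_apply', Function.iterate_succ_apply']
      have hx' : f^[k] x ∈ X := hfX.iterate k hx
      have hy' : f^[k] y ∈ X := hfX.iterate k hy
      calc dist (f (f^[k] x)) (f (f^[k] y)) ≤ L * dist (f^[k] x) (f^[k] y) := by
            rw [dist_eq_norm, dist_eq_norm]; exact hfLip _ hx' _ hy'
        _ ≤ max 1 L * (max 1 L ^ k * dist x y) := by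
            refine mul_le_mul (le_max_right _ _) (ih x hx y hy) dist_nonneg (by positivity)
        _ = max 1 L ^ (k + 1) * dist x y := by ring
  rw [lipschitzOnWith_iff_dist_le_mul]
  intro x hx y hy
  rw [Real.coe_toNNReal _ (by positivity)]
  have h2 := EuclideanSpace.dist_eq (trajMap n l f x) (trajMap n l f y)
  refine le_trans (le_of_eq h2) ?_
  have hbound : ∀ pq : Fin l × Fin n,
      dist (trajMap n l f x pq) (trajMap n l f y pq) ^ 2
        ≤ (max 1 L ^ l * dist x y) ^ 2 := by
    intro pq
    have h1 : dist (trajMap n l f x pq) (trajMap n l f y pq)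
        ≤ dist (f^[(pq.1 : ℕ)] x) (f^[(pq.1 : ℕ)] y) :=
      euclid_coord_dist_le (f^[(pq.1 : ℕ)] x) (f^[(pq.1 : ℕ)] y) pq.2
    have h2' : dist (f^[(pq.1 : ℕ)] x) (f^[(pq.1 : ℕ)] y) ≤ max 1 L ^ l * dist x y := by
      calc dist (f^[(pq.1 : ℕ)] x) (f^[(pq.1 : ℕ)] y)
          ≤ max 1 L ^ (pq.1 : ℕ) * dist x y := hiter _ x hx y hy
        _ ≤ max 1 L ^ l * dist x y := by
            refine mul_le_mul_of_nonneg_right ?_ dist_nonneg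
            exact pow_le_pow_right₀ hML (le_of_lt pq.1.isLt)
    exact pow_le_pow_left₀ dist_nonneg (h1.trans h2') 2
  calc Real.sqrt (∑ pq : Fin l × Fin n, dist (trajMap n l f x pq) (trajMap n l f y pq) ^ 2)
      ≤ Real.sqrt (∑ _pq : Fin l × Fin n, (max 1 L ^ l * dist x y) ^ 2) :=
        Real.sqrt_le_sqrt (Finset.sum_le_sum fun pq _ => hbound pq)
    _ = Real.sqrt ((l * n : ℝ)) * (max 1 L ^ l * dist x y) := by
        rw [Finset.sum_const, Finset.card_univ, Fintype.card_prod, Fintype.card_fin,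
          Fintype.card_fin, nsmul_eq_mul, Real.sqrt_mul (by positivity),
          Real.sqrt_sq (by positivity)]
        push_cast
        ring_nf
    _ = Real.sqrt (l * n) * max 1 L ^ l * dist x y := by push_cast; ring




theorem trajectory_entropy_dominates_initial_entropy
    (n l : ℕ) (hn : 1 ≤ n) (hl : 1 ≤ l)
    (X : Set (EuclideanSpace ℝ (Fin n))) (hX : IsCompact X)
    (f : EuclideanSpace ℝ (Fin n) → EuclideanSpace ℝ (Fin n)) (hfX : Set.MapsTo f X X)
    (L : ℝ) (hL : 0 < L) (hfLip : ∀ x ∈ X, ∀ y ∈ X, ‖f x - f y‖ ≤ L * ‖x - y‖)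
    (hfdiff : ∀ x ∈ X, DifferentiableAt ℝ f x)
    (μ₀ : Measure (EuclideanSpace ℝ (Fin n))) [IsProbabilityMeasure μ₀]
    (p₀ : EuclideanSpace ℝ (Fin n) → ℝ) (hp₀ : ∀ x, 0 ≤ p₀ x)
    (hμ₀ : μ₀ = (volume.restrict X).withDensity fun x => ENNReal.ofReal (p₀ x))
    -- finiteness of the generalized and Rényi entropies of ξ₀
    (hent₀ : IntegrableOn (fun x => p₀ x * Real.log (p₀ x)) X volume)
    (hren₀ : ∀ s : ℝ, 1 < s →
      IntegrableOn (fun x => p₀ x ^ s) X volume ∧ 0 < ∫ x in X, p₀ x ^ s) :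
    -- h(ξ) ≥ h(ξ₀)
    (-(∫ x in X, p₀ x * Real.log (p₀ x)) ≤
      -(∫ y in trajMap n l f '' X,
          ((Measure.map (trajMap n l f) μ₀).rnDeriv
              ((μH[(n : ℝ)]).restrict (trajMap n l f '' X)) y).toReal *
            Real.log (((Measure.map (trajMap n l f) μ₀).rnDeriv
              ((μH[(n : ℝ)]).restrict (trajMap n l f '' X)) y).toReal)
          ∂(μH[(n : ℝ)]))) ∧
    -- h_s(ξ) ≥ h_s(ξ₀) for every s ∈ (1, ∞)
    ∀ s : ℝ, 1 < s →
      (1 / (1 - s)) * Real.log (∫ x in X, p₀ x ^ s) ≤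
        (1 / (1 - s)) * Real.log (∫ y in trajMap n l f '' X,
          ((Measure.map (trajMap n l f) μ₀).rnDeriv
              ((μH[(n : ℝ)]).restrict (trajMap n l f '' X)) y).toReal ^ s
          ∂(μH[(n : ℝ)])) := by
  have hXm : MeasurableSet X := hX.isClosed.measurableSet
  set ρ : Measure (EuclideanSpace ℝ (Fin n)) := volume.restrict X with hρdef
  set T : EuclideanSpace ℝ (Fin n) → EuclideanSpace ℝ (Fin l × Fin n) := trajMap n l f
    with hTdef
  set B : Set (EuclideanSpace ℝ (Fin l × Fin n)) := T '' X with hBdef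
  have hl0 : 0 < l := hl
  set P : EuclideanSpace ℝ (Fin l × Fin n) → EuclideanSpace ℝ (Fin n) :=
    projMap n l ⟨0, hl0⟩ with hPdef
  have hPm : Measurable P :=
    (proj_lipschitz n l _).continuous.measurable
  have hPT : ∀ x, P (T x) = x := fun x => proj_trajMap n l hl0 f x
  have hPLip : LipschitzWith 1 P := proj_lipschitz n l _
  -- Lipschitz data for T
  have hTLip := trajMap_lipschitzOnWith n l X f hfX L hL hfLip
  have hTcont : ContinuousOn T X := hTLip.continuousOn
  have hBcomp : IsCompact B := hX.image_of_continuousOn hTcont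
  have hBm : MeasurableSet B := hBcomp.isClosed.measurableSet
  set ν : Measure (EuclideanSpace ℝ (Fin l × Fin n)) := (μH[(n : ℝ)]).restrict B with hνdef
  haveI hνfin : IsFiniteMeasure ν := by
    refine ⟨?_⟩
    rw [hνdef, Measure.restrict_apply_univ]
    refine lt_of_le_of_lt (hTLip.hausdorffMeasure_image_le (by positivity)) ?_
    exact ENNReal.mul_lt_top
      (ENNReal.rpow_lt_top_of_nonneg (by positivity) ENNReal.coe_ne_top)
      (hausdorff_compact_lt_top n X hX)
  -- measurable representative of the density
  have hpae : AEMeasurable p₀ ρ := by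
    have h2 : AEMeasurable (fun x => p₀ x ^ (2:ℝ)) ρ :=
      ((hren₀ 2 one_lt_two).1).aestronglyMeasurable.aemeasurable
    have hrepr : p₀ = fun x => (p₀ x ^ (2:ℝ)) ^ ((2:ℝ)⁻¹) := by
      funext x
      rw [← Real.rpow_mul (hp₀ x)]
      norm_num
    rw [hrepr]
    exact h2.pow aemeasurable_const
  set p : EuclideanSpace ℝ (Fin n) → ℝ := fun x => max (hpae.mk p₀ x) 0 with hpdef
  have hpm : Measurable p := hpae.measurable_mk.max measurable_const
  have hp0 : ∀ x, 0 ≤ p x := fun x => le_max_right _ _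
  have hpeq : (fun x => p x) =ᵐ[ρ] p₀ := by
    filter_upwards [hpae.ae_eq_mk] with x hx
    rw [hpdef]
    simp only [← hx]
    exact max_eq_left (hp₀ x)
  have hμ₀p : μ₀ = ρ.withDensity (fun x => ENNReal.ofReal (p x)) := by
    rw [hμ₀]
    exact (withDensity_congr_ae (by filter_upwards [hpeq] with x hx; rw [hx])).symm
  -- measurable modification of T
  have hTae : AEMeasurable T ρ := hTcont.aemeasurable hXm
  set T' := hTae.mk T with hT'def
  have hT'm : Measurable T' := hTae.measurable_mk
  have hTT' : T =ᵐ[ρ] T' := hTae.ae_eq_mk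
  have hPT' : ∀ᵐ x ∂ρ, P (T' x) = x := by
    filter_upwards [hTT'] with x hx
    rw [← hx, hPT]
  -- domination
  have hdom : Measure.map T' ρ ≤ ν := by
    have hmapc : Measure.map T' ρ = Measure.map T ρ := (Measure.map_congr hTT').symm
    rw [hmapc, Measure.le_iff]
    intro A hA
    rw [Measure.map_apply_of_aemeasurable hTae hA, hρdef, Measure.restrict_apply' hXm]
    have hsub : T ⁻¹' A ∩ X ⊆ P '' (A ∩ B) := by
      rintro x ⟨hxA, hxX⟩
      exact ⟨T x, ⟨hxA, ⟨x, hxX, rfl⟩⟩, hPT x⟩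
    calc volume (T ⁻¹' A ∩ X) ≤ volume (P '' (A ∩ B)) := measure_mono hsub
      _ ≤ μH[(n : ℝ)] (P '' (A ∩ B)) := Measure.le_iff'.1 (volume_le_hausdorff n) _
      _ ≤ (1:ℝ≥0) ^ (n : ℝ) * μH[(n : ℝ)] (A ∩ B) :=
          hPLip.hausdorffMeasure_image_le (by positivity) _
      _ = μH[(n : ℝ)] (A ∩ B) := by simp
      _ = ν A := (Measure.restrict_apply hA).symm
  -- probability instance
  haveI hprob : IsProbabilityMeasure (ρ.withDensity fun x => ENNReal.ofReal (p x)) := by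
    rw [← hμ₀p]; infer_instance
  -- map equality
  have hμ₀ac : μ₀ ≪ ρ := by
    rw [hμ₀p]; exact withDensity_absolutelyContinuous _ _
  have hmapeq : Measure.map T μ₀
      = Measure.map T' (ρ.withDensity fun x => ENNReal.ofReal (p x)) := by
    rw [← hμ₀p]
    exact Measure.map_congr (hTT'.filter_mono hμ₀ac.ae_le)
  have hcore := core ρ ν p hpm hp0 hprob T' hT'm P hPm hPT' hdom
  rw [hmapeq]
  constructor
  · -- entropy
    have hent' : Integrable (fun x => p x * Real.log (p x)) ρ := by
      refine hent₀.congr ?_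
      filter_upwards [hpeq] with x hx
      rw [hx]
    have h1 := hcore.1 hent'
    have h2 : ∫ a, p a * Real.log (p a) ∂ρ = ∫ x in X, p₀ x * Real.log (p₀ x) := by
      refine integral_congr_ae ?_
      filter_upwards [hpeq] with x hx
      rw [hx]
    rw [h2] at h1
    exact neg_le_neg h1
  · -- Rényi
    intro s hs
    have hint' : Integrable (fun x => p x ^ s) ρ := by
      refine ((hren₀ s hs).1).congr ?_
      filter_upwards [hpeq] with x hx
      rw [hx]
    obtain ⟨hpos, hle⟩ := hcore.2 s hs hint'
    have heqs : ∫ a, p a ^ s ∂ρ = ∫ x in X, p₀ x ^ s := by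
      refine integral_congr_ae ?_
      filter_upwards [hpeq] with x hx
      rw [hx]
    rw [heqs] at hle
    have hlog := Real.log_le_log hpos hle
    have hneg : 1 / (1 - s) ≤ 0 := by
      apply div_nonpos_of_nonneg_of_nonpos
      · norm_num
      · linarith
    exact mul_le_mul_of_nonpos_left hlog hneg
end
end
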